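/- arXiv:1204.3139 — 2 statements merged into one kernel-verified Lean document; each statement's English description precedes it below -/
import Mathlib

section
/- Let n ≥ 2 be an integer. Then SL(n,ℚ) has no proper subgroup of finite index: every subgroup H of SL(n,ℚ) with finite index satisfies H = SL(n,ℚ). -/
/-!
A finite-index subgroup `H` contains the finite-index normal subgroup `N = H.normalCore`, and
`g ^ N.index ∈ N` for every `g`. So `H` contains every element having an `m`-th root for all
`m ≥ 1`. Over a field of characteristic zero every transvection `1 + c E_{ij}` is such an
element, being the `m`-th power of `1 + (c / m) E_{ij}`, and the transvections generate `SL`.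
-/

namespace Subgroup

variable {G : Type*} [Group G]

theorem mem_of_forall_exists_pow_eq (H : Subgroup G) [H.FiniteIndex] {s : G}
    (hs : ∀ m : ℕ, m ≠ 0 → ∃ g, g ^ m = s) : s ∈ H := by
  obtain ⟨g, rfl⟩ := hs H.normalCore.index FiniteIndex.index_ne_zero
  exact H.normalCore_le (pow_index_mem _ g)

theorem eq_top_of_finiteIndex_of_closure_eq_top {S : Set G} (hS : closure S = ⊤)
    (hdiv : ∀ s ∈ S, ∀ m : ℕ, m ≠ 0 → ∃ g, g ^ m = s) (H : Subgroup G) [H.FiniteIndex] :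
    H = ⊤ := by
  rw [eq_top_iff, ← hS, closure_le]
  exact fun s hs ↦ H.mem_of_forall_exists_pow_eq (hdiv s hs)

end Subgroup

namespace Matrix.SpecialLinearGroup

variable {ι F : Type*} [DecidableEq ι] [Fintype ι]

theorem transvection_pow [CommRing F] {i j : ι} (hij : i ≠ j) (b : F) (m : ℕ) :
    transvection hij b ^ m = transvection hij (m * b) := by
  induction m with
  | zero => simp
  | succ m ih => rw [pow_succ, ih, ← transvection_add, Nat.cast_succ, add_one_mul]

theorem exists_pow_eq_transvection [Field F] [CharZero F] {i j : ι} (hij : i ≠ j) (b : F)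
    {m : ℕ} (hm : m ≠ 0) : ∃ g, g ^ m = transvection hij b :=
  ⟨transvection hij (b / m), by rw [transvection_pow, mul_div_cancel₀ _ (Nat.cast_ne_zero.2 hm)]⟩

theorem diag2n_eq_transvection_prod [Field F] {i j : ι} (hij : i ≠ j) (a : F) (ha : a ≠ 0) :
    diag2n hij a ha = transvection hij a * transvection hij.symm (-a⁻¹) * transvection hij a *
      transvection hij (-1) * transvection hij.symm 1 * transvection hij (-1) := by
  have trichotomy (k : ι) : k = i ∨ k = j ∨ (i ≠ k ∧ j ≠ k) := by tauto
  ext x y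
  simp only [diag2n_coe, coe_mul, transvection_coe, mul_add, add_mul, mul_one, one_mul,
    single_mul_single_same, single_mul_single_of_ne _ _ _ _ hij,
    single_mul_single_of_ne _ _ _ _ hij.symm]
  simp only [add_apply, one_apply, single_apply, diagonal_apply]
  rcases trichotomy x with rfl | rfl | ⟨hx, hx'⟩ <;> rcases trichotomy y with rfl | rfl | ⟨hy, hy'⟩ <;>
    simp [*, Ne.symm, hij.symm]

theorem closure_range_transvection [Field F] :
    Subgroup.closure (Set.range (TransvectionStruct.toSpecialLinearGroup (ι := ι) (F := F))) =
      ⊤ := by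
  set S := Set.range (TransvectionStruct.toSpecialLinearGroup (ι := ι) (F := F))
  have hS {i j : ι} (hij : i ≠ j) (c : F) : transvection hij c ∈ Subgroup.closure S :=
    Subgroup.subset_closure ⟨⟨i, j, hij, c⟩, rfl⟩
  rw [Subgroup.eq_top_iff']
  intro g
  rcases subsingleton_or_nontrivial ι with _ | _
  · exact Subsingleton.elim 1 g ▸ one_mem _
  refine diagonal_transvection_induction' (· ∈ Subgroup.closure S) g (fun i j hij a ha ↦ ?_)
    (fun _ _ ↦ hS) (fun _ _ ↦ mul_mem)
  rw [diag2n_eq_transvection_prod]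
  exact mul_mem (mul_mem (mul_mem (mul_mem (mul_mem (hS _ _) (hS _ _)) (hS _ _)) (hS _ _))
    (hS _ _)) (hS _ _)

theorem eq_top_of_finiteIndex [Field F] [CharZero F] (H : Subgroup (SpecialLinearGroup ι F))
    [H.FiniteIndex] : H = ⊤ := by
  refine Subgroup.eq_top_of_finiteIndex_of_closure_eq_top closure_range_transvection ?_ H
  rintro _ ⟨t, rfl⟩ m hm
  exact exists_pow_eq_transvection t.hij t.c hm

end Matrix.SpecialLinearGroup

theorem sl_n_Q_no_proper_finite_index_subgroup_general (n : ℕ)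
    (H : Subgroup (Matrix.SpecialLinearGroup (Fin n) ℚ)) (hH : H.FiniteIndex) :
    H = ⊤ :=
  Matrix.SpecialLinearGroup.eq_top_of_finiteIndex H

/-- `SL(n,ℚ)` (`n ≥ 2`) has no proper subgroup of finite index. -/
theorem sl_n_Q_no_proper_finite_index_subgroup (n : ℕ) (hn : 2 ≤ n)
    (H : Subgroup (Matrix.SpecialLinearGroup (Fin n) ℚ)) (hH : H.FiniteIndex) :
    H = ⊤ :=
  sl_n_Q_no_proper_finite_index_subgroup_general n H hH
end

section
/- Let n ≥ 2 be an integer. The diagonal embedding of SL(n,ℤ) into the product ∏_p SL(n,ℤ_p), taken over all prime numbers p, has dense image, where each SL(n,ℤ_p) carries the topology induced from the p-adic topology on the ring ℤ_p of p-adic integers and the product carries the product topology. -/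
instance natPrimesFact (p : Nat.Primes) : Fact (Nat.Prime (p : ℕ)) := ⟨p.2⟩

/-- `SL(n, ℤ_p)` with the topology induced from the `p`-adic topology on matrix entries. -/
noncomputable instance slPadicTopology (n : ℕ) (p : Nat.Primes) :
    TopologicalSpace (Matrix.SpecialLinearGroup (Fin n) ℤ_[(p : ℕ)]) :=
  TopologicalSpace.induced
    (fun A => (A : Matrix (Fin n) (Fin n) ℤ_[(p : ℕ)])) inferInstance

/-!
A basic neighbourhood of a point `x` of `∏_p SL(n, ℤ_p)` constrains finitely many coordinates
`x_p`, each modulo some `p ^ k_p`. By the Chinese remainder theorem these constraints describe a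
single element of `SL(n, ℤ/m)` with `m = ∏ p ^ k_p`, so it suffices that reduction
`SL(n, ℤ) → SL(n, ℤ/m)` is surjective. That follows by induction on `n`: since `ℤ/m` has
stable range one, elementary row operations (which lift to `SL(n, ℤ)`) turn the first column of
any matrix of `SL(n, ℤ/m)` into the first unit vector, leaving a matrix of `SL(n - 1, ℤ/m)`.
-/

open Matrix Filter Topology
open scoped Function

namespace PadicInt

variable {p : ℕ} [Fact p.Prime]

theorem toZModPow_eq_iff_norm_sub_le (k : ℕ) (x y : ℤ_[p]) :
    toZModPow k x = toZModPow k y ↔ ‖x - y‖ ≤ (p : ℝ)⁻¹ ^ k := by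
  rw [inv_pow, ← zpow_natCast, ← _root_.zpow_neg, norm_le_pow_iff_mem_span_pow, ← ker_toZModPow,
    RingHom.mem_ker, map_sub, sub_eq_zero]

theorem nhds_basis_matrix_map_toZModPow {m n : Type*} [Fintype m] [Fintype n]
    (X : Matrix m n ℤ_[p]) :
    (𝓝 X).HasBasis (fun _ : ℕ => True)
      fun k => {Y | Y.map (toZModPow k) = X.map (toZModPow k)} := by
  have hp : (0 : ℝ) < (p : ℝ)⁻¹ := inv_pos.2 (Nat.cast_pos.2 (Fact.out : p.Prime).pos)
  have hp1 : (p : ℝ)⁻¹ < 1 :=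
    inv_lt_one_of_one_lt₀ (Nat.one_lt_cast.2 (Fact.out : p.Prime).one_lt)
  show (𝓝 (of.symm X)).HasBasis _ _
  refine (Metric.nhds_basis_closedBall_pow hp hp1).congr (fun _ => Iff.rfl) fun k _ => ?_
  ext Y
  have hk : (0 : ℝ) ≤ (p : ℝ)⁻¹ ^ k := pow_nonneg hp.le k
  rw [Metric.mem_closedBall, dist_pi_le_iff hk]
  simp only [dist_pi_le_iff hk]
  simp only [dist_eq_norm, ← toZModPow_eq_iff_norm_sub_le]
  exact Matrix.ext_iff

end PadicInt

theorem ZMod.exists_isUnit_add_mul {m : ℕ} [NeZero m] {a b : ZMod m} (h : IsCoprime a b) :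
    ∃ t : ZMod m, IsUnit (a + t * b) := by
  classical
  -- every prime factor of `m` divides exactly one of `a` and `t * b`
  set t : ℕ := ∏ r ∈ m.primeFactors with ¬ r ∣ a.val, r
  refine ⟨t, ?_⟩
  rw [← ZMod.natCast_zmod_val a, ← ZMod.natCast_zmod_val b, ← Nat.cast_mul, ← Nat.cast_add,
    ZMod.isUnit_iff_coprime, Nat.coprime_comm]
  refine Nat.coprime_of_dvd fun r hr hrm hra => ?_
  have hdvd_t : r ∣ t ↔ ¬ r ∣ a.val := by
    refine ⟨fun hrt => ?_, fun hr_a => Finset.dvd_prod_of_mem _ ?_⟩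
    · obtain ⟨s, hs, hrs⟩ := (Prime.dvd_finsetProd_iff hr.prime _).1 hrt
      rw [Finset.mem_filter, Nat.mem_primeFactors] at hs
      exact (Nat.prime_dvd_prime_iff_eq hr hs.1.1).1 hrs ▸ hs.2
    · exact Finset.mem_filter.2 ⟨Nat.mem_primeFactors.2 ⟨hr, hrm, NeZero.ne m⟩, hr_a⟩
  by_cases hr_a : r ∣ a.val
  · have hr_b : ¬ r ∣ b.val := fun hr_b => by
      have := Fact.mk hr
      have hcop := h.map (ZMod.castHom hrm (ZMod r))
      rw [ZMod.castHom_apply, ZMod.castHom_apply, ZMod.cast_eq_val, ZMod.cast_eq_val,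
        (ZMod.natCast_eq_zero_iff _ _).2 hr_a, (ZMod.natCast_eq_zero_iff _ _).2 hr_b] at hcop
      exact not_isUnit_zero (isCoprime_zero_left.1 hcop)
    have hr_tb : r ∣ t * b.val := (Nat.dvd_add_right hr_a).1 hra
    exact hr_b ((hr.dvd_mul.1 hr_tb).resolve_left (hdvd_t.not.2 (not_not.2 hr_a)))
  · exact hr_a ((Nat.dvd_add_left (dvd_mul_of_dvd_left (hdvd_t.2 hr_a) _)).1 hra)

theorem Matrix.det_one_add_vecMulVec {R ι : Type*} [CommRing R] [Fintype ι] [DecidableEq ι]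
    (u v : ι → R) : (1 + vecMulVec u v).det = 1 + v ⬝ᵥ u := by
  rw [vecMulVec_eq Unit, det_one_add_replicateCol_mul_replicateRow]

theorem Matrix.det_eq_det_submatrix_succ_of_col_zero {R : Type*} [CommRing R] {n : ℕ}
    (A : Matrix (Fin (n + 1)) (Fin (n + 1)) R)
    (hA : ∀ i, A i 0 = (Pi.single 0 1 : Fin (n + 1) → R) i) :
    A.det = (A.submatrix Fin.succ Fin.succ).det := by
  rw [det_succ_column_zero, Fin.sum_univ_succ]
  simp [hA]

namespace Matrix.SpecialLinearGroup

section Reduction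

variable {ι : Type*} [Fintype ι] [DecidableEq ι] {m : ℕ}

theorem exists_mem_range_coe_eq_one_add_vecMulVec (u v : ι → ZMod m)
    (huv : ∀ i, u i = 0 ∨ v i = 0) :
    ∃ E ∈ (map (n := ι) (Int.castRingHom (ZMod m))).range,
      (E : Matrix ι ι (ZMod m)) = 1 + vecMulVec u v := by
  let u' : ι → ℤ := fun i => (u i).cast
  let v' : ι → ℤ := fun i => (v i).cast
  have hdet : (1 + vecMulVec u' v').det = 1 := by
    rw [det_one_add_vecMulVec, add_eq_left]
    refine Finset.sum_eq_zero fun i _ => ?_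
    rcases huv i with h | h <;> simp [u', v', h]
  refine ⟨_, ⟨⟨_, hdet⟩, rfl⟩, ?_⟩
  ext i j
  change Int.castRingHom (ZMod m) ((1 + vecMulVec u' v') i j) = _
  simp [u', v', vecMulVec_apply, one_apply, apply_ite]

theorem exists_mem_range_mul_apply_eq (M : SpecialLinearGroup ι (ZMod m)) (u v : ι → ZMod m)
    (huv : ∀ i, u i = 0 ∨ v i = 0) :
    ∃ E ∈ (map (n := ι) (Int.castRingHom (ZMod m))).range,
      ∀ i j, (E * M) i j = M i j + u i * (v ᵥ* M) j := by
  obtain ⟨E, hE, hEuv⟩ := exists_mem_range_coe_eq_one_add_vecMulVec u v huv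
  refine ⟨E, hE, fun i j => ?_⟩
  rw [coe_mul, hEuv, add_mul, one_mul, vecMulVec_mul, add_apply, vecMulVec_apply]

variable {n : ℕ}

theorem exists_mem_range_isUnit_mul_apply_one_zero [NeZero m]
    (M : SpecialLinearGroup (Fin (n + 2)) (ZMod m)) :
    ∃ E ∈ (map (n := Fin (n + 2)) (Int.castRingHom (ZMod m))).range, IsUnit ((E * M) 1 0) := by
  set c := adjugate (M : Matrix (Fin (n + 2)) (Fin (n + 2)) (ZMod m)) 0
  set v := c - Pi.single 1 (c 1)
  have hcM : (c ᵥ* (M : Matrix (Fin (n + 2)) (Fin (n + 2)) (ZMod m))) 0 = 1 := by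
    rw [← mul_apply_eq_vecMul, adjugate_mul, M.det_coe, one_smul, one_apply_eq]
  have hcop : IsCoprime (M 1 0) ((v ᵥ* (M : Matrix (Fin (n + 2)) (Fin (n + 2)) (ZMod m))) 0) := by
    refine ⟨c 1, 1, ?_⟩
    simp only [v, sub_vecMul, single_vecMul, Pi.sub_apply, Pi.smul_apply, row_apply, hcM,
      smul_eq_mul]
    ring
  obtain ⟨t, ht⟩ := ZMod.exists_isUnit_add_mul hcop
  obtain ⟨E, hE, hEM⟩ := exists_mem_range_mul_apply_eq M (Pi.single 1 t) v fun i => by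
    rcases eq_or_ne i 1 with rfl | hi
    · simp [v]
    · simp [hi]
  exact ⟨E, hE, by simpa [hEM] using ht⟩

theorem exists_mem_range_mul_apply_zero_zero_eq_one
    (M : SpecialLinearGroup (Fin (n + 2)) (ZMod m)) (hM : IsUnit (M 1 0)) :
    ∃ E ∈ (map (n := Fin (n + 2)) (Int.castRingHom (ZMod m))).range, (E * M) 0 0 = 1 := by
  obtain ⟨E, hE, hEM⟩ := exists_mem_range_mul_apply_eq M (Pi.single 0 ((1 - M 0 0) * hM.unit⁻¹))
    (Pi.single 1 1) fun i => by
    rcases eq_or_ne i 0 with rfl | hi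
    · simp
    · simp [hi]
  refine ⟨E, hE, ?_⟩
  rw [hEM]
  simp [mul_assoc, hM.val_inv_mul]

theorem exists_mem_range_mul_apply_zero_eq_single_of_apply_zero_zero
    (M : SpecialLinearGroup (Fin (n + 1)) (ZMod m)) (hM : M 0 0 = 1) :
    ∃ E ∈ (map (n := Fin (n + 1)) (Int.castRingHom (ZMod m))).range,
      ∀ i, (E * M) i 0 = (Pi.single 0 1 : Fin (n + 1) → ZMod m) i := by
  obtain ⟨E, hE, hEM⟩ := exists_mem_range_mul_apply_eq M (Pi.single 0 1 - fun i => M i 0)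
    (Pi.single 0 1) fun i => by
    rcases eq_or_ne i 0 with rfl | hi
    · simp [hM]
    · simp [hi]
  refine ⟨E, hE, fun i => ?_⟩
  rw [hEM]
  simp [hM]

theorem exists_mem_range_mul_apply_zero_eq_single [NeZero m]
    (M : SpecialLinearGroup (Fin (n + 1)) (ZMod m)) :
    ∃ E ∈ (map (n := Fin (n + 1)) (Int.castRingHom (ZMod m))).range,
      ∀ i, (E * M) i 0 = (Pi.single 0 1 : Fin (n + 1) → ZMod m) i := by
  cases n with
  | zero =>
    refine ⟨1, one_mem _, fun i => ?_⟩
    rw [Fin.fin_one_eq_zero i, one_mul, Pi.single_eq_same]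
    exact (det_fin_one _).symm.trans M.det_coe
  | succ n =>
    obtain ⟨E₁, hE₁, h₁⟩ := exists_mem_range_isUnit_mul_apply_one_zero M
    obtain ⟨E₂, hE₂, h₂⟩ := exists_mem_range_mul_apply_zero_zero_eq_one (E₁ * M) h₁
    obtain ⟨E₃, hE₃, h₃⟩ := exists_mem_range_mul_apply_zero_eq_single_of_apply_zero_zero _ h₂
    exact ⟨E₃ * E₂ * E₁, mul_mem (mul_mem hE₃ hE₂) hE₁, by simpa only [mul_assoc] using h₃⟩

theorem mem_range_of_apply_zero_eq_single
    (hsurj : Function.Surjective (map (n := Fin n) (Int.castRingHom (ZMod m))))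
    (M : SpecialLinearGroup (Fin (n + 1)) (ZMod m))
    (hM : ∀ i, M i 0 = (Pi.single 0 1 : Fin (n + 1) → ZMod m) i) :
    M ∈ (map (n := Fin (n + 1)) (Int.castRingHom (ZMod m))).range := by
  obtain ⟨C, hC⟩ := hsurj ⟨(M : Matrix _ _ (ZMod m)).submatrix Fin.succ Fin.succ, by
    rw [← det_eq_det_submatrix_succ_of_col_zero _ hM, M.det_coe]⟩
  -- the corner is `1` rather than the lift of `M 0 0 = 1`, which is `0` when `m = 1`
  let B : Matrix (Fin (n + 1)) (Fin (n + 1)) ℤ :=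
    of (vecCons (vecCons 1 fun j => (M 0 j.succ).cast) fun i => vecCons 0 (C i))
  have hB : B.det = 1 := by
    rw [det_eq_det_submatrix_succ_of_col_zero B fun i => by cases i using Fin.cases <;> simp [B]]
    exact C.det_coe
  refine ⟨⟨B, hB⟩, Subtype.ext ?_⟩
  ext i j
  change Int.castRingHom (ZMod m) (B i j) = M i j
  refine Fin.cases ?_ (fun i => ?_) i <;> refine Fin.cases ?_ (fun j => ?_) j
  · simpa [B] using (hM 0).symm
  · simp [B]
  · simpa [B] using (hM i.succ).symm
  · simpa [B] using congrArg (fun X : SpecialLinearGroup (Fin n) (ZMod m) => X i j) hC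

theorem map_intCast_surjective [NeZero m] (n : ℕ) :
    Function.Surjective (map (n := Fin n) (Int.castRingHom (ZMod m))) := by
  induction n with
  | zero => exact fun M => ⟨1, Subsingleton.elim _ _⟩
  | succ n ih =>
    intro M
    obtain ⟨E, hE, hEM⟩ := exists_mem_range_mul_apply_zero_eq_single M
    exact (Subgroup.mul_mem_cancel_left _ hE).1 (mem_range_of_apply_zero_eq_single ih _ hEM)

end Reduction

theorem map_map_intCastRingHom {ι R S : Type*} [Fintype ι] [DecidableEq ι] [CommRing R]
    [CommRing S] (f : R →+* S) (A : SpecialLinearGroup ι ℤ) :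
    map f (map (Int.castRingHom R) A) = map (Int.castRingHom S) A := by
  ext i j
  simp [map_apply_coe]

theorem exists_map_intCast_eq_of_pairwise_coprime {κ : Type*} [Fintype κ] (n : ℕ) (a : κ → ℕ)
    [∀ k, NeZero (a k)] (ha : Pairwise (Nat.Coprime on a))
    (M : ∀ k, SpecialLinearGroup (Fin n) (ZMod (a k))) :
    ∃ A : SpecialLinearGroup (Fin n) ℤ, ∀ k, map (Int.castRingHom (ZMod (a k))) A = M k := by
  have : NeZero (∏ k, a k) := ⟨Finset.prod_ne_zero_iff.2 fun k _ => NeZero.ne (a k)⟩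
  let e := ZMod.prodEquivPi a ha
  let M' : SpecialLinearGroup (Fin n) (∀ k, ZMod (a k)) := ⟨of fun i j k => M k i j, by
    ext k
    exact ((Pi.evalRingHom (fun k => ZMod (a k)) k).map_det (of fun i j k => M k i j)).trans
      (M k).det_coe⟩
  obtain ⟨A, hA⟩ := map_intCast_surjective n (map e.symm.toRingHom M')
  refine ⟨A, fun k => Subtype.ext ?_⟩
  ext i j
  have h := congrArg (fun X : SpecialLinearGroup (Fin n) _ => e (X i j) k) hA
  simp only [map_apply_coe, RingHom.mapMatrix_apply, map_apply, RingEquiv.toRingHom_eq_coe,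
    RingHom.coe_coe, RingEquiv.apply_symm_apply, Int.coe_castRingHom, map_intCast,
    Pi.intCast_apply] at h ⊢
  exact h

theorem nhds_basis_map_toZModPow {n : ℕ} {p : Nat.Primes}
    (x : SpecialLinearGroup (Fin n) ℤ_[(p : ℕ)]) :
    (𝓝 x).HasBasis (fun _ : ℕ => True)
      fun k => {y | map (PadicInt.toZModPow k) y = map (PadicInt.toZModPow k) x} := by
  rw [nhds_induced]
  refine ((PadicInt.nhds_basis_matrix_map_toZModPow _).comap _).congr (fun _ => Iff.rfl)
    fun k _ => ?_
  ext y
  exact ⟨fun h => Matrix.SpecialLinearGroup.ext _ _ fun i j => congrFun (congrFun h i) j,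
    congrArg Subtype.val⟩

end Matrix.SpecialLinearGroup

theorem sl_n_Z_denseRange_diagonal_general (n : ℕ) :
    DenseRange (fun (A : Matrix.SpecialLinearGroup (Fin n) ℤ) (p : Nat.Primes) =>
      Matrix.SpecialLinearGroup.map (Int.castRingHom ℤ_[(p : ℕ)]) A) := by
  intro x
  have hbasis := Filter.hasBasis_pi fun p => SpecialLinearGroup.nhds_basis_map_toZModPow (x p)
  rw [← nhds_pi] at hbasis
  refine (mem_closure_iff_nhds_basis hbasis).2 fun ⟨I, k⟩ ⟨hI, _⟩ => ?_
  have := hI.fintype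
  have (p : I) : NeZero (((p : Nat.Primes) : ℕ) ^ k p) :=
    ⟨pow_ne_zero _ (p : Nat.Primes).2.ne_zero⟩
  have hcop : Pairwise (Nat.Coprime on fun p : I => ((p : Nat.Primes) : ℕ) ^ k p) :=
    fun p q hpq =>
      .pow _ _ ((Nat.coprime_primes p.1.2 q.1.2).2 fun h => hpq (Subtype.ext (Subtype.ext h)))
  obtain ⟨A, hA⟩ := SpecialLinearGroup.exists_map_intCast_eq_of_pairwise_coprime n _ hcop
    fun p => SpecialLinearGroup.map (PadicInt.toZModPow (k p)) (x p)
  exact ⟨_, ⟨A, rfl⟩, fun p hp =>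
    (SpecialLinearGroup.map_map_intCastRingHom _ A).trans (hA ⟨p, hp⟩)⟩

/-- The diagonal embedding of `SL(n,ℤ)` in `∏_p SL(n,ℤ_p)` (product over all primes,
with the product topology) has dense image. -/
theorem sl_n_Z_denseRange_diagonal (n : ℕ) (hn : 2 ≤ n) :
    DenseRange (fun (A : Matrix.SpecialLinearGroup (Fin n) ℤ) (p : Nat.Primes) =>
      Matrix.SpecialLinearGroup.map (Int.castRingHom ℤ_[(p : ℕ)]) A) :=
  sl_n_Z_denseRange_diagonal_general n
end
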